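/- arXiv:2302.03280 — 6 statements merged into one kernel-verified Lean document; each statement's English description precedes it below -/
import Mathlib

section
/- For complex τ and z with Im τ > 0, ∏_{n=1}^∞ (1 - e^{2πinτ})(1 + e^{πi(2n-1)τ} e^{2πiz})(1 + e^{πi(2n-1)τ} e^{-2πiz}) = ∑_{n=-∞}^∞ e^{πin²τ} e^{2πinz}. -/
/-!
For `N` factors on each side, the finite product
`∏_{k<N} (1 + q^(2k+1) x)(1 + q^(2k+1) x⁻¹) = ∑_{|i| ≤ N} [2N, N+i]_{q²} q^(i²) xⁱ`
is the q-binomial theorem applied to the `2N` factors `1 + x q^(1-2N) q^(2j)`, `j < 2N`.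
After multiplying by `(q²; q²)_N`, the coefficients `(q²; q²)_N [2N, N+i]_{q²}` are uniformly
bounded and tend to `1` as `N → ∞`, so Tannery's theorem passes to the limit.
-/

open Finset Filter Topology

section CommRing

variable {R : Type*} [CommRing R]

/-- `qPochhammer Q n` is the q-Pochhammer symbol `(Q; Q)ₙ`. -/
def qPochhammer (Q : R) (n : ℕ) : R := ∏ k ∈ range n, (1 - Q ^ (k + 1))

def gaussBinomial (Q : R) : ℕ → ℕ → R
  | _, 0 => 1
  | 0, _ + 1 => 0
  | n + 1, m + 1 => gaussBinomial Q n m + Q ^ (m + 1) * gaussBinomial Q n (m + 1)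

variable (Q : R)

@[simp]
lemma qPochhammer_zero : qPochhammer Q 0 = 1 := prod_range_zero _

lemma qPochhammer_succ (n : ℕ) : qPochhammer Q (n + 1) = qPochhammer Q n * (1 - Q ^ (n + 1)) :=
  prod_range_succ _ n

@[simp]
lemma gaussBinomial_zero_right (n : ℕ) : gaussBinomial Q n 0 = 1 := by
  cases n <;> rfl

lemma gaussBinomial_succ_succ (n m : ℕ) :
    gaussBinomial Q (n + 1) (m + 1) =
      gaussBinomial Q n m + Q ^ (m + 1) * gaussBinomial Q n (m + 1) := rfl

lemma gaussBinomial_of_lt {n m : ℕ} (h : n < m) : gaussBinomial Q n m = 0 := by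
  induction n generalizing m with
  | zero => obtain ⟨m, rfl⟩ := Nat.exists_eq_add_one_of_ne_zero h.ne'; rfl
  | succ n ih =>
    obtain ⟨m, rfl⟩ := Nat.exists_eq_add_one_of_ne_zero (by omega : m ≠ 0)
    rw [gaussBinomial_succ_succ, ih (by omega), ih (by omega), mul_zero, add_zero]

lemma gaussBinomial_mul_qPochhammer_mul_qPochhammer {n m : ℕ} (h : m ≤ n) :
    gaussBinomial Q n m * qPochhammer Q m * qPochhammer Q (n - m) = qPochhammer Q n := by
  induction n generalizing m with
  | zero => obtain rfl := Nat.le_zero.1 h; simp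
  | succ n ih =>
    cases m with
    | zero => simp
    | succ m =>
      have hlow := ih (Nat.le_of_lt_succ h)
      have hhigh : gaussBinomial Q n (m + 1) * qPochhammer Q (m + 1) * qPochhammer Q (n - m) =
          qPochhammer Q n * (1 - Q ^ (n - m)) := by
        rcases (Nat.le_of_lt_succ h).lt_or_eq with hm | rfl
        · rw [show n - m = n - (m + 1) + 1 by omega, qPochhammer_succ Q (n - (m + 1)),
            ← mul_assoc, ih hm, show n - (m + 1) + 1 = n - m by omega]
        · simp [gaussBinomial_of_lt]
      have hpow : Q ^ (m + 1) * Q ^ (n - m) = Q ^ (n + 1) := by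
        rw [← pow_add]; congr 1; omega
      rw [gaussBinomial_succ_succ, Nat.add_sub_add_right, qPochhammer_succ Q n,
        qPochhammer_succ Q m]
      rw [qPochhammer_succ Q m] at hhigh
      linear_combination (1 - Q ^ (m + 1)) * hlow + Q ^ (m + 1) * hhigh - qPochhammer Q n * hpow

/-- The q-binomial theorem. -/
theorem prod_one_add_mul_pow_eq_sum (y : R) (n : ℕ) :
    ∏ j ∈ range n, (1 + y * Q ^ j) =
      ∑ m ∈ range (n + 1), Q ^ m.choose 2 * gaussBinomial Q n m * y ^ m := by
  induction n generalizing y with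
  | zero => simp
  | succ n ih =>
    set T : ℕ → R := fun m => Q ^ m.choose 2 * gaussBinomial Q n m * (y * Q) ^ m
    have hT_top : T (n + 1) = 0 := by simp [T, gaussBinomial_of_lt]
    have hpascal (m : ℕ) :
        Q ^ (m + 1).choose 2 * gaussBinomial Q (n + 1) (m + 1) * y ^ (m + 1) =
          y * T m + T (m + 1) := by
      simp only [T, gaussBinomial_succ_succ, Nat.choose_succ_succ', Nat.choose_one_right, pow_add,
        mul_pow]
      ring
    calc ∏ j ∈ range (n + 1), (1 + y * Q ^ j)
        = (1 + y) * ∑ m ∈ range (n + 1), T m := by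
          rw [prod_range_succ', ← ih, pow_zero, mul_one, mul_comm]
          simp only [pow_succ', mul_assoc]
      _ = y * ∑ m ∈ range (n + 1), T m + (∑ m ∈ range (n + 1), T (m + 1) + T 0) := by
          rw [← sum_range_succ' T, sum_range_succ T (n + 1), hT_top]; ring
      _ = _ := by
          rw [sum_range_succ' _ (n + 1), ← add_assoc, mul_sum, ← sum_add_distrib]
          simp [hpascal, T]

end CommRing

section Field

variable {K : Type*} [Field K]

lemma gaussBinomial_eq_div {Q : K} (hQ : ∀ n, qPochhammer Q n ≠ 0) {n m : ℕ} (h : m ≤ n) :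
    gaussBinomial Q n m = qPochhammer Q n / (qPochhammer Q m * qPochhammer Q (n - m)) := by
  rw [eq_div_iff (mul_ne_zero (hQ m) (hQ _)), ← mul_assoc,
    gaussBinomial_mul_qPochhammer_mul_qPochhammer Q h]

lemma prod_range_pow_two_mul_add_one (q : K) (N : ℕ) :
    ∏ k ∈ range N, q ^ (2 * k + 1) = q ^ N ^ 2 := by
  induction N with
  | zero => simp
  | succ N ih => rw [prod_range_succ, ih, ← pow_add]; congr 1; ring

variable {q x : K}

lemma prod_range_one_add_mul_pow_two_mul_eq (hq : q ≠ 0) (hx : x ≠ 0) (N : ℕ) :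
    ∏ j ∈ range (2 * N), (1 + x * q ^ (1 - 2 * N : ℤ) * (q ^ 2) ^ j) =
      x ^ N / q ^ N ^ 2 *
        ∏ k ∈ range N, ((1 + q ^ (2 * k + 1) * x) * (1 + q ^ (2 * k + 1) * x⁻¹)) := by
  have hfactor (j : ℕ) :
      x * q ^ (1 - 2 * N : ℤ) * (q ^ 2) ^ j = x * q ^ ((2 * j + 1 : ℤ) - 2 * N) := by
    rw [mul_assoc, ← pow_mul, ← zpow_natCast, ← zpow_add₀ hq]; push_cast; ring_nf
  have hlow (k : ℕ) (hk : k < N) : 1 + x * q ^ (1 - 2 * N : ℤ) * (q ^ 2) ^ (N - 1 - k) =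
      x / q ^ (2 * k + 1) * (1 + q ^ (2 * k + 1) * x⁻¹) := by
    rw [hfactor, show (2 * (N - 1 - k : ℕ) + 1 : ℤ) - 2 * N = -(2 * k + 1 : ℕ) by omega,
      zpow_neg, zpow_natCast]
    field_simp
    ring
  have hhigh (k : ℕ) :
      1 + x * q ^ (1 - 2 * N : ℤ) * (q ^ 2) ^ (N + k) = 1 + q ^ (2 * k + 1) * x := by
    rw [hfactor, show (2 * (N + k : ℕ) + 1 : ℤ) - 2 * N = (2 * k + 1 : ℕ) by omega, zpow_natCast,
      mul_comm]
  rw [two_mul, prod_range_add, ← prod_range_reflect,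
    prod_congr rfl fun k hk => hlow k (mem_range.1 hk), prod_congr rfl fun k _ => hhigh k,
    prod_mul_distrib, prod_div_distrib, prod_const, card_range, prod_range_pow_two_mul_add_one,
    prod_mul_distrib]
  ring

theorem prod_range_jacobi_eq_sum (hq : q ≠ 0) (hx : x ≠ 0) (N : ℕ) :
    ∏ k ∈ range N, ((1 + q ^ (2 * k + 1) * x) * (1 + q ^ (2 * k + 1) * x⁻¹)) =
      ∑ i ∈ Icc (-(N : ℤ)) N,
        gaussBinomial (q ^ 2) (2 * N) (i + N).toNat * q ^ (i ^ 2) * x ^ i := by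
  have hterm (m : ℕ) (c : K) :
      q ^ N ^ 2 / x ^ N * ((q ^ 2) ^ m.choose 2 * c * (x * q ^ (1 - 2 * N : ℤ)) ^ m) =
        c * q ^ (((m : ℤ) - N) ^ 2) * x ^ ((m : ℤ) - N) := by
    have hchoose : ((m.choose 2 : ℕ) : ℤ) * 2 = m * (m - 1) := by
      induction m with
      | zero => simp
      | succ m ih =>
        rw [Nat.choose_succ_succ', Nat.choose_one_right]; push_cast; linear_combination ih
    have hexp :
        ((m : ℤ) - N) ^ 2 = (N ^ 2 : ℕ) + ((m.choose 2 * 2 : ℕ) : ℤ) + (1 - 2 * N) * m := by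
      push_cast; linear_combination -hchoose
    rw [hexp, zpow_add₀ hq, zpow_add₀ hq, zpow_sub₀ hx, zpow_mul, mul_pow]
    simp only [zpow_natCast]
    field_simp
    ring
  calc _ = q ^ N ^ 2 / x ^ N *
          ∏ j ∈ range (2 * N), (1 + x * q ^ (1 - 2 * N : ℤ) * (q ^ 2) ^ j) := by
        rw [prod_range_one_add_mul_pow_two_mul_eq hq hx, ← inv_div,
          inv_mul_cancel_left₀ (div_ne_zero (pow_ne_zero _ hx) (pow_ne_zero _ hq))]
    _ = ∑ m ∈ range (2 * N + 1),
          gaussBinomial (q ^ 2) (2 * N) m * q ^ (((m : ℤ) - N) ^ 2) * x ^ ((m : ℤ) - N) := by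
        rw [prod_one_add_mul_pow_eq_sum, mul_sum]
        exact sum_congr rfl fun m _ => hterm m _
    _ = _ := by
        refine sum_nbij' (fun m => (m : ℤ) - N) (fun i => (i + N).toNat) ?_ ?_ ?_ ?_
          fun m _ => by simp
        all_goals intro a ha; simp only [mem_range, mem_Icc] at ha ⊢; omega

end Field

lemma summable_pow_sq_mul_pow {r : ℝ} (hr₀ : 0 ≤ r) (hr : r < 1) (R : ℝ) :
    Summable fun n : ℕ => r ^ n ^ 2 * R ^ n := by
  obtain ⟨M, hM⟩ : ∃ M : ℕ, r ^ M * ‖R‖ ≤ 1 / 2 := by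
    have : Tendsto (fun M : ℕ => r ^ M * ‖R‖) atTop (𝓝 0) := by
      simpa using (tendsto_pow_atTop_nhds_zero_of_lt_one hr₀ hr).mul_const ‖R‖
    exact (this.eventually_le_const (by norm_num)).exists
  refine .of_norm_bounded_eventually_nat summable_geometric_two ?_
  filter_upwards [eventually_ge_atTop M] with n hn
  calc ‖r ^ n ^ 2 * R ^ n‖ = (r ^ n * ‖R‖) ^ n := by
        rw [norm_mul, norm_pow, norm_pow, Real.norm_of_nonneg hr₀, mul_pow, ← pow_mul, sq]
    _ ≤ (1 / 2) ^ n := by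
        gcongr
        exact (mul_le_mul_of_nonneg_right (pow_le_pow_of_le_one hr₀ hr.le hn)
          (norm_nonneg R)).trans hM

lemma summable_norm_zpow_sq_mul_zpow {𝕜 : Type*} [NormedField 𝕜] {q : 𝕜} (hq : ‖q‖ < 1) (x : 𝕜) :
    Summable fun n : ℤ => ‖q ^ (n ^ 2) * x ^ n‖ := by
  refine .of_nat_of_neg ?_ ?_
  · simpa [norm_zpow, ← zpow_natCast] using summable_pow_sq_mul_pow (norm_nonneg q) hq ‖x‖
  · simpa [norm_zpow, ← zpow_natCast] using summable_pow_sq_mul_pow (norm_nonneg q) hq ‖x‖⁻¹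

lemma tendsto_sum_Icc_mul_of_tendsto_one {𝕜 : Type*} [NormedField 𝕜] [CompleteSpace 𝕜]
    {c : ℕ → ℤ → 𝕜} {a : ℤ → 𝕜} {C : ℝ} (ha : Summable fun i => ‖a i‖)
    (hc : ∀ i, Tendsto (c · i) atTop (𝓝 1)) (hC : ∀ N i, ‖c N i‖ ≤ C) :
    Tendsto (fun N : ℕ => ∑ i ∈ Icc (-(N : ℤ)) N, c N i * a i) atTop (𝓝 (∑' i, a i)) := by
  refine (tendsto_tsum_of_dominated_convergence (ha.mul_left C)
    (f := fun (N : ℕ) => (Icc (-(N : ℤ)) N : Set ℤ).indicator fun i => c N i * a i)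
    (fun i => ?_) (.of_forall fun N i => ?_)).congr fun N => (sum_eq_tsum_indicator _ _).symm
  · have : Tendsto (fun N => c N i * a i) atTop (𝓝 (a i)) := by
      simpa using (hc i).mul_const (a i)
    refine this.congr' ?_
    filter_upwards [eventually_ge_atTop i.natAbs] with N hN
    rw [Set.indicator_of_mem (by simp only [coe_Icc, Set.mem_Icc]; omega)]
  · refine (norm_indicator_le_norm_self _ _).trans ?_
    rw [norm_mul]
    exact mul_le_mul_of_nonneg_right (hC N i) (norm_nonneg _)

section Complex

variable {Q : ℂ}

lemma one_sub_pow_succ_ne_zero (hQ : ‖Q‖ < 1) (k : ℕ) : 1 - Q ^ (k + 1) ≠ 0 := by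
  intro h
  have : ‖Q ^ (k + 1)‖ < 1 := by
    rw [norm_pow]; exact pow_lt_one₀ (norm_nonneg Q) hQ k.succ_ne_zero
  rw [← sub_eq_zero.1 h, norm_one] at this
  exact this.false

lemma qPochhammer_ne_zero (hQ : ‖Q‖ < 1) (n : ℕ) : qPochhammer Q n ≠ 0 :=
  prod_ne_zero_iff.2 fun k _ => one_sub_pow_succ_ne_zero hQ k

lemma tendsto_qPochhammer (hQ : ‖Q‖ < 1) :
    Tendsto (qPochhammer Q) atTop (𝓝 (∏' k, (1 - Q ^ (k + 1)))) :=
  (ModularForm.multipliable_one_sub_pow hQ).hasProd.tendsto_prod_nat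

lemma tprod_one_sub_pow_succ_ne_zero (hQ : ‖Q‖ < 1) : ∏' k, (1 - Q ^ (k + 1)) ≠ 0 := by
  simpa [sub_eq_add_neg] using tprod_one_add_ne_zero_of_summable (f := fun k => -Q ^ (k + 1))
    (by simpa [sub_eq_add_neg] using one_sub_pow_succ_ne_zero hQ)
    (by simpa [summable_nat_add_iff] using summable_geometric_of_lt_one (norm_nonneg Q) hQ)

lemma exists_norm_qPochhammer_mul_gaussBinomial_le (hQ : ‖Q‖ < 1) :
    ∃ C, ∀ k n m, ‖qPochhammer Q k * gaussBinomial Q n m‖ ≤ C := by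
  have hlim := tendsto_qPochhammer hQ
  obtain ⟨B, hB⟩ := isBounded_iff_forall_norm_le.1 (Metric.isBounded_range_of_tendsto _ hlim)
  obtain ⟨B', hB'⟩ := isBounded_iff_forall_norm_le.1
    (Metric.isBounded_range_of_tendsto _ (hlim.inv₀ (tprod_one_sub_pow_succ_ne_zero hQ)))
  have hB₀ : 0 ≤ B := (norm_nonneg _).trans (hB _ ⟨0, rfl⟩)
  have hB'₀ : 0 ≤ B' := (norm_nonneg _).trans (hB' _ ⟨0, rfl⟩)
  refine ⟨B * (B * (B' * B')), fun k n m => ?_⟩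
  rcases le_or_gt m n with h | h
  · rw [gaussBinomial_eq_div (qPochhammer_ne_zero hQ) h, div_eq_mul_inv, mul_inv, norm_mul,
      norm_mul, norm_mul]
    gcongr
    exacts [hB _ ⟨k, rfl⟩, hB _ ⟨n, rfl⟩, hB' _ ⟨m, rfl⟩, hB' _ ⟨n - m, rfl⟩]
  · rw [gaussBinomial_of_lt _ h, mul_zero, norm_zero]
    positivity

lemma tendsto_qPochhammer_mul_gaussBinomial (hQ : ‖Q‖ < 1) (i : ℤ) :
    Tendsto (fun N : ℕ => qPochhammer Q N * gaussBinomial Q (2 * N) (i + N).toNat) atTop (𝓝 1) := by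
  set P := ∏' k, (1 - Q ^ (k + 1))
  have hP : P * P ≠ 0 :=
    mul_ne_zero (tprod_one_sub_pow_succ_ne_zero hQ) (tprod_one_sub_pow_succ_ne_zero hQ)
  have hcomp {f : ℕ → ℕ} (hf : ∀ N, N - i.natAbs ≤ f N) :
      Tendsto (fun N => qPochhammer Q (f N)) atTop (𝓝 P) :=
    (tendsto_qPochhammer hQ).comp (tendsto_atTop_mono hf (tendsto_sub_atTop_nat _))
  have hlim := ((hcomp (f := id) (by simp)).mul (hcomp (f := (2 * ·)) (by omega))).div
    ((hcomp (f := fun N => (i + N).toNat) (by omega)).mul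
      (hcomp (f := fun N => 2 * N - (i + N).toNat) (by omega))) hP
  rw [div_self hP] at hlim
  refine hlim.congr' ?_
  filter_upwards [eventually_ge_atTop i.natAbs] with N hN
  rw [gaussBinomial_eq_div (qPochhammer_ne_zero hQ) (by omega)]
  simp only [Pi.div_apply, id, mul_div_assoc]

variable {q x : ℂ}

theorem jacobi_triple_product (hq₀ : q ≠ 0) (hq : ‖q‖ < 1) (hx : x ≠ 0) :
    ∏' n : ℕ, ((1 - (q ^ 2) ^ (n + 1)) * (1 + q ^ (2 * n + 1) * x) * (1 + q ^ (2 * n + 1) * x⁻¹)) =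
      ∑' n : ℤ, q ^ (n ^ 2) * x ^ n := by
  have hQ : ‖q ^ 2‖ < 1 := by rw [norm_pow]; exact pow_lt_one₀ (norm_nonneg q) hq two_ne_zero
  have hodd (y : ℂ) : Multipliable fun n : ℕ => 1 + q ^ (2 * n + 1) * y := by
    refine multipliable_one_add_of_summable ?_
    simpa [pow_succ, pow_mul, mul_assoc] using
      ((summable_geometric_of_lt_one (norm_nonneg _) hQ).mul_right (‖q‖ * ‖y‖))
  have hmult := ((ModularForm.multipliable_one_sub_pow hQ).mul (hodd x)).mul (hodd x⁻¹)
  obtain ⟨C, hC⟩ := exists_norm_qPochhammer_mul_gaussBinomial_le hQ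
  have hlim := tendsto_sum_Icc_mul_of_tendsto_one (summable_norm_zpow_sq_mul_zpow hq x)
    (tendsto_qPochhammer_mul_gaussBinomial hQ) (fun N i => hC N _ _)
  refine tendsto_nhds_unique hmult.hasProd.tendsto_prod_nat (hlim.congr fun N => ?_)
  have hsplit : ∏ k ∈ range N,
      ((1 - (q ^ 2) ^ (k + 1)) * (1 + q ^ (2 * k + 1) * x) * (1 + q ^ (2 * k + 1) * x⁻¹)) =
        qPochhammer (q ^ 2) N *
          ∏ k ∈ range N, ((1 + q ^ (2 * k + 1) * x) * (1 + q ^ (2 * k + 1) * x⁻¹)) := by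
    simp only [qPochhammer, mul_assoc, prod_mul_distrib]
  rw [hsplit, prod_range_jacobi_eq_sum hq₀ hx, mul_sum]
  exact sum_congr rfl fun i _ => by ring

end Complex

open Complex Real

theorem jacobi_triple_product_exp (τ z : ℂ) (hτ : 0 < τ.im) :
    ∏' n : ℕ, ((1 - Complex.exp (2 * π * I * (n + 1) * τ)) *
      (1 + Complex.exp (π * I * (2 * (n + 1) - 1) * τ) * Complex.exp (2 * π * I * z)) *
      (1 + Complex.exp (π * I * (2 * (n + 1) - 1) * τ) * Complex.exp (-(2 * π * I * z)))) =
    ∑' n : ℤ, Complex.exp (π * I * (n : ℂ) ^ 2 * τ) * Complex.exp (2 * π * I * n * z) := by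
  have hq : ‖cexp (π * I * τ)‖ < 1 := by
    rw [Complex.norm_exp, Real.exp_lt_one_iff]
    simpa using mul_pos pi_pos hτ
  convert jacobi_triple_product (exp_ne_zero _) hq (exp_ne_zero (2 * π * I * z)) using 3 with n n
  · rw [show 2 * π * I * (n + 1) * τ = ((2 * (n + 1) : ℕ) : ℂ) * (π * I * τ) by push_cast; ring,
      show π * I * (2 * (n + 1) - 1) * τ = ((2 * n + 1 : ℕ) : ℂ) * (π * I * τ) by push_cast; ring,
      Complex.exp_nat_mul, Complex.exp_nat_mul, pow_mul, Complex.exp_neg]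
  · rw [show π * I * n ^ 2 * τ = ((n ^ 2 : ℤ) : ℂ) * (π * I * τ) by push_cast; ring,
      show 2 * π * I * n * z = n * (2 * π * I * z) by ring, exp_int_mul, exp_int_mul]
end

section
/- For u > 0 and real numbers a, b, ∑_{n∈ℤ} e^{-2πi(n+a)b} e^{-πu(n+a)²} = u^{-1/2} ∑_{n∈ℤ} e^{2πina} e^{-π(n+b)²/u}. -/
/-! Completing the square turns the twisted, shifted Gaussian into `exp (-π u n² + 2π B n)` with
`B = -(i b + u a)`, whose transformation formula under Poisson summation is
`Complex.tsum_exp_neg_quadratic`; completing the square once more on the dual side gives the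
stated summands. -/

open Complex Real

lemma twisted_shifted_gaussian_eq (x u a b : ℂ) :
    cexp (-(2 * π * I * (x + a) * b)) * cexp (-(π * u * (x + a) ^ 2)) =
      cexp (-(π * u * a ^ 2) - 2 * π * I * a * b) *
        cexp (-π * u * x ^ 2 + 2 * π * -(I * b + u * a) * x) := by
  rw [← Complex.exp_add, ← Complex.exp_add]
  ring_nf

lemma dual_gaussian_eq {u : ℂ} (hu : u ≠ 0) (x a b : ℂ) :
    cexp (-(π * u * a ^ 2) - 2 * π * I * a * b) * cexp (-π / u * (x + I * -(I * b + u * a)) ^ 2) =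
      cexp (2 * π * I * x * a) * cexp (-(π * (x + b) ^ 2 / u)) := by
  rw [← Complex.exp_add, ← Complex.exp_add]
  congr 1
  field_simp
  linear_combination (-2 * u * a * b * I - u ^ 2 * a ^ 2 + 2 * b * x + b ^ 2 * (1 - I ^ 2)) * I_sq

theorem Complex.tsum_exp_twisted_shifted_gaussian {u : ℂ} (hu : 0 < u.re) (a b : ℂ) :
    ∑' n : ℤ, cexp (-(2 * π * I * (n + a) * b)) * cexp (-(π * u * (n + a) ^ 2)) =
      1 / u ^ (1 / 2 : ℂ) *
        ∑' n : ℤ, cexp (2 * π * I * n * a) * cexp (-(π * (n + b) ^ 2 / u)) := by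
  have hu₀ : u ≠ 0 := fun h ↦ hu.ne' (by simp [h])
  simp_rw [twisted_shifted_gaussian_eq, tsum_mul_left, Complex.tsum_exp_neg_quadratic hu,
    ← dual_gaussian_eq hu₀, tsum_mul_left]
  ring

lemma Complex.ofReal_cpow_one_half {x : ℝ} (hx : 0 ≤ x) : (x : ℂ) ^ (1 / 2 : ℂ) = √x := by
  rw [Real.sqrt_eq_rpow, ofReal_cpow hx]
  norm_num

theorem gaussian_poisson (u : ℝ) (hu : 0 < u) (a b : ℝ) :
    ∑' n : ℤ, Complex.exp (-(2 * π * I * (n + a) * b)) * Complex.exp (-(π * u * (n + a) ^ 2)) =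
    (1 / Real.sqrt u : ℝ) *
      ∑' n : ℤ, Complex.exp (2 * π * I * n * a) * Complex.exp (-(π * (n + b) ^ 2 / u)) := by
  rw [Complex.tsum_exp_twisted_shifted_gaussian (by simpa using hu),
    Complex.ofReal_cpow_one_half hu.le]
  push_cast
  ring
end

section
/- For complex τ, z, w with Im τ > 0, ∑_{n∈ℤ} e^{-2πi(n+z)w} e^{πiτ(n+z)²} = (-iτ)^{-1/2} ∑_{n∈ℤ} e^{2πinz} e^{-πi(n+w)²/τ}, where (-iτ)^{-1/2} is the principal branch. -/
open Complex Real

theorem theta_transformation (τ z w : ℂ) (hτ : 0 < τ.im) :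
    ∑' n : ℤ, Complex.exp (-(2 * π * I * (n + z) * w)) * Complex.exp (π * I * τ * (n + z) ^ 2) =
    (-I * τ) ^ (-(1 / 2 : ℂ)) *
      ∑' n : ℤ, Complex.exp (2 * π * I * n * z) * Complex.exp (-(π * I * (n + w) ^ 2 / τ)) := by
  have h0 : τ ≠ 0 := by intro h; rw [h, zero_im] at hτ; exact lt_irrefl 0 hτ
  have h2 : 0 < (-I * τ).re := by
    simpa only [neg_mul, neg_re, mul_re, I_re, zero_mul, I_im, one_mul, zero_sub, neg_neg] using hτ
  calc
  _ = Complex.exp (π * I * τ * z ^ 2 - 2 * π * I * z * w) *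
      ∑' n : ℤ, Complex.exp (-π * (-I * τ) * n ^ 2 + 2 * π * (I * (τ * z - w)) * n) := by
    rw [← tsum_mul_left]
    congr 1 with n
    rw [← Complex.exp_add, ← Complex.exp_add]
    congr 1
    ring
  _ = Complex.exp (π * I * τ * z ^ 2 - 2 * π * I * z * w) *
      (1 / (-I * τ) ^ (1 / 2 : ℂ) *
        ∑' n : ℤ, Complex.exp (-π / (-I * τ) * (n + I * (I * (τ * z - w))) ^ 2)) := by
    rw [Complex.tsum_exp_neg_quadratic h2]
  _ = _ := by
    rw [cpow_neg, ← one_div, mul_comm (Complex.exp _), mul_assoc]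
    congr 1
    rw [← tsum_mul_right]
    congr 1 with n
    rw [← Complex.exp_add, ← Complex.exp_add]
    congr 1
    field_simp
    ring_nf
    simp_rw [I_sq, I_pow_four]
    ring
end

section
/- For Im τ > 0, ∏_{n=1}^∞ (1 - e^{2πinτ}) = ∑_{n=-∞}^∞ (-1)^n e^{πi(3n²-n)τ} = ∑_{n=-∞}^∞ (-1)^n e^{πi(3n²+n)τ}. -/
/-!
Mathlib proves `∏ (1 - x ^ (n + 1)) = ∑ (-1) ^ k (x ^ p(-k) - x ^ p(k + 1))`, `p = pentagonal`,
in any topological ring in which the series and products occurring in Euler's argument converge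
(`Pentagonal.tprod_one_sub_pow`). For `‖x‖ < 1` in a complete normed ring, every finite product
`∏ (1 - x ^ (k + i + 1))` has norm at most `exp (1 - ‖x‖)⁻¹`, so all those series are dominated
by geometric ones. Pairing the terms `n` and `-(n + 1)` of the bilateral series gives back the
one-sided sum, and at `x = exp (2πiτ)` the exponents match because `2 p(n) = n (3n - 1)`.
-/

open Complex Real Filter Topology Pentagonal

theorem natAbs_le_pentagonal (n : ℤ) : n.natAbs ≤ pentagonal n := by
  have h := two_mul_natCast_pentagonal n
  zify
  rcases abs_cases n with ⟨hn, -⟩ | ⟨hn, -⟩ <;> rw [hn] <;> nlinarith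

theorem summable_pow_natAbs {r : ℝ} (h₀ : 0 ≤ r) (h₁ : r < 1) :
    Summable fun n : ℤ ↦ r ^ n.natAbs := by
  have hgeom := summable_geometric_of_lt_one h₀ h₁
  refine .of_nat_of_neg_add_one (by simpa only [Int.natAbs_natCast] using hgeom) ?_
  simpa only [Int.natAbs_neg, ← Nat.cast_succ, Int.natAbs_natCast] using
    (summable_nat_add_iff 1).mpr hgeom

section NormedRing

variable {R : Type*} [NormedCommRing R] [NormOneClass R] {x : R}

theorem norm_pow_le_pow_of_norm_le_one (hx : ‖x‖ ≤ 1) {m n : ℕ} (h : m ≤ n) :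
    ‖x ^ n‖ ≤ ‖x‖ ^ m :=
  (norm_pow_le x n).trans (pow_le_pow_of_le_one (norm_nonneg x) hx h)

theorem norm_prod_one_sub_pow_le (hx : ‖x‖ < 1) (k : ℕ) (s : Finset ℕ) :
    ‖∏ i ∈ s, (1 - x ^ (k + i + 1))‖ ≤ Real.exp (1 - ‖x‖)⁻¹ := by
  simp_rw [sub_eq_add_neg (1 : R)]
  calc ‖∏ i ∈ s, (1 + -x ^ (k + i + 1))‖
      ≤ ‖∏ i ∈ s, (1 + -x ^ (k + i + 1)) - 1‖ + ‖(1 : R)‖ := norm_le_norm_sub_add _ _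
    _ ≤ Real.exp (∑ i ∈ s, ‖-x ^ (k + i + 1)‖) - 1 + 1 := by
      grw [s.norm_prod_one_add_sub_one_le, norm_one]
    _ ≤ Real.exp (∑ i ∈ s, ‖x‖ ^ i) := by
      simp only [sub_add_cancel, norm_neg]
      gcongr with i
      exact norm_pow_le_pow_of_norm_le_one hx.le (by omega)
    _ ≤ Real.exp (1 - ‖x‖)⁻¹ := by
      rw [← tsum_geometric_of_lt_one (norm_nonneg x) hx]
      gcongr
      exact (summable_geometric_of_lt_one (norm_nonneg x) hx).sum_le_tsum s
        fun i _ ↦ pow_nonneg (norm_nonneg x) i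

theorem norm_pow_mul_prod_one_sub_pow_le (hx : ‖x‖ < 1) (k n : ℕ) :
    ‖x ^ ((k + 1) * n) * ∏ i ∈ Finset.range (n + 1), (1 - x ^ (k + i + 1))‖ ≤
      Real.exp (1 - ‖x‖)⁻¹ * ‖x‖ ^ n := by
  rw [mul_comm _ (‖x‖ ^ n)]
  refine (norm_mul_le _ _).trans (mul_le_mul ?_ (norm_prod_one_sub_pow_le hx k _)
    (norm_nonneg _) (pow_nonneg (norm_nonneg x) n))
  exact norm_pow_le_pow_of_norm_le_one hx.le (Nat.le_mul_of_pos_left n k.succ_pos)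

theorem norm_tsum_pow_mul_prod_one_sub_pow_le (hx : ‖x‖ < 1) (k : ℕ) :
    ‖∑' n, x ^ ((k + 1) * n) * ∏ i ∈ Finset.range (n + 1), (1 - x ^ (k + i + 1))‖ ≤
      Real.exp (1 - ‖x‖)⁻¹ * (1 - ‖x‖)⁻¹ :=
  tsum_of_norm_bounded ((hasSum_geometric_of_lt_one (norm_nonneg x) hx).mul_left _)
    (norm_pow_mul_prod_one_sub_pow_le hx k)

theorem tendsto_pentagonal_remainder (hx : ‖x‖ < 1) :
    Tendsto (fun k ↦ (-1) ^ (k + 1) * x ^ ((k + 1) * (3 * k + 4) / 2) *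
      ∑' n, x ^ ((k + 1) * n) * ∏ i ∈ Finset.range (n + 1), (1 - x ^ (k + i + 1)))
      atTop (𝓝 0) := by
  have hgeom := (tendsto_pow_atTop_nhds_zero_of_lt_one (norm_nonneg x) hx).mul_const
    (Real.exp (1 - ‖x‖)⁻¹ * (1 - ‖x‖)⁻¹)
  rw [zero_mul] at hgeom
  refine squeeze_zero_norm (fun k ↦ ?_) hgeom
  grw [norm_mul_le, norm_mul_le, norm_pow_le, norm_neg, norm_one, one_pow, one_mul]
  gcongr
  · exact norm_pow_le_pow_of_norm_le_one hx.le ((Nat.le_div_iff_mul_le two_pos).2 (by nlinarith))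
  · exact norm_tsum_pow_mul_prod_one_sub_pow_le hx k

variable [CompleteSpace R]

theorem summable_pow_mul_prod_one_sub_pow (hx : ‖x‖ < 1) (k : ℕ) :
    Summable fun n ↦ x ^ ((k + 1) * n) * ∏ i ∈ Finset.range (n + 1), (1 - x ^ (k + i + 1)) :=
  .of_norm_bounded ((summable_geometric_of_lt_one (norm_nonneg x) hx).mul_left _)
    (norm_pow_mul_prod_one_sub_pow_le hx k)

theorem multipliable_one_sub_pow_add (hx : ‖x‖ < 1) (k : ℕ) :
    Multipliable fun n ↦ 1 - x ^ (n + k + 1) := by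
  simp_rw [sub_eq_add_neg (1 : R)]
  refine multipliable_one_add_of_summable <|
    (summable_geometric_of_lt_one (norm_nonneg x) hx).of_nonneg_of_le (fun _ ↦ norm_nonneg _)
      fun n ↦ ?_
  rw [norm_neg]
  exact norm_pow_le_pow_of_norm_le_one hx.le (by omega)

end NormedRing

section NormedField

variable {𝕜 : Type*} [NormedField 𝕜] [CompleteSpace 𝕜] {x : 𝕜}

theorem summable_neg_one_zpow_mul_pow_pentagonal_neg (hx : ‖x‖ < 1) :
    Summable fun n : ℤ ↦ (-1) ^ n * x ^ pentagonal (-n) := by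
  refine .of_norm_bounded (summable_pow_natAbs (norm_nonneg x) hx) fun n ↦ ?_
  rw [norm_mul, norm_zpow, norm_neg, norm_one, one_zpow, one_mul, norm_pow]
  exact pow_le_pow_of_le_one (norm_nonneg x) hx.le (by simpa using natAbs_le_pentagonal (-n))

theorem tprod_one_sub_pow_eq_tsum_pentagonal_neg (hx : ‖x‖ < 1) :
    ∏' n, (1 - x ^ (n + 1)) = ∑' n : ℤ, (-1) ^ n * x ^ pentagonal (-n) := by
  have hsum := summable_neg_one_zpow_mul_pow_pentagonal_neg hx
  have hpair : (fun k : ℕ ↦ (-1) ^ k * (x ^ pentagonal (-k) - x ^ pentagonal (k + 1))) =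
      fun k : ℕ ↦ (-1) ^ (k : ℤ) * x ^ pentagonal (-k) +
        (-1) ^ (-(k + 1 : ℤ)) * x ^ pentagonal (-(-(k + 1 : ℤ))) := by
    ext k
    rw [neg_neg, zpow_neg, zpow_natCast, ← Nat.cast_succ, zpow_natCast, pow_succ, mul_inv,
      ← inv_pow, inv_neg_one]
    ring
  rw [tprod_one_sub_pow (tendsto_pow_atTop_nhds_zero_of_norm_lt_one hx)
    (summable_pow_mul_prod_one_sub_pow hx) (multipliable_one_sub_pow_add hx)
    (hpair ▸ hsum.nat_add_neg_add_one) (tendsto_pentagonal_remainder hx), hpair,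
    tsum_nat_add_neg_add_one hsum]

theorem tprod_one_sub_pow_eq_tsum_pentagonal (hx : ‖x‖ < 1) :
    ∏' n, (1 - x ^ (n + 1)) = ∑' n : ℤ, (-1) ^ n * x ^ pentagonal n := by
  rw [tprod_one_sub_pow_eq_tsum_pentagonal_neg hx, ← (Equiv.neg ℤ).tsum_eq]
  simp only [Equiv.neg_apply, neg_neg, zpow_neg, ← inv_zpow, inv_neg_one]

end NormedField

theorem cexp_pentagonal (τ : ℂ) (n : ℤ) :
    cexp (π * I * (3 * (n : ℂ) ^ 2 - n) * τ) = cexp (2 * π * I * τ) ^ pentagonal n := by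
  have h : (2 * pentagonal n : ℂ) = n * (3 * n - 1) := mod_cast two_mul_natCast_pentagonal n
  rw [← Complex.exp_nat_mul]
  congr 1
  linear_combination -(π * I * τ) * h

theorem cexp_pentagonal_neg (τ : ℂ) (n : ℤ) :
    cexp (π * I * (3 * (n : ℂ) ^ 2 + n) * τ) = cexp (2 * π * I * τ) ^ pentagonal (-n) := by
  have h : (2 * pentagonal (-n) : ℂ) = n * (3 * n + 1) :=
    mod_cast two_mul_natCast_pentagonal_neg n
  rw [← Complex.exp_nat_mul]
  congr 1
  linear_combination -(π * I * τ) * h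

theorem euler_pentagonal (τ : ℂ) (hτ : 0 < τ.im) :
    (∏' n : ℕ, (1 - Complex.exp (2 * π * I * (n + 1) * τ)) =
      ∑' n : ℤ, (-1) ^ n * Complex.exp (π * I * (3 * (n : ℂ) ^ 2 - n) * τ)) ∧
    (∏' n : ℕ, (1 - Complex.exp (2 * π * I * (n + 1) * τ)) =
      ∑' n : ℤ, (-1) ^ n * Complex.exp (π * I * (3 * (n : ℂ) ^ 2 + n) * τ)) := by
  have hq : ‖cexp (2 * π * I * τ)‖ < 1 := UpperHalfPlane.norm_exp_two_pi_I_lt_one ⟨τ, hτ⟩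
  have hprod (n : ℕ) : cexp (2 * π * I * (n + 1) * τ) = cexp (2 * π * I * τ) ^ (n + 1) := by
    rw [← Complex.exp_nat_mul]
    congr 1
    push_cast
    ring
  simp_rw [hprod, cexp_pentagonal, cexp_pentagonal_neg]
  exact ⟨tprod_one_sub_pow_eq_tsum_pentagonal hq, tprod_one_sub_pow_eq_tsum_pentagonal_neg hq⟩
end

section
/- For Im τ > 0, η(τ) = ∑_{n∈ℤ} e^{πin} e^{3πi(n+1/6)²τ}, where η(τ) = e^{πiτ/12} ∏_{n=1}^∞ (1 - e^{2πinτ}). -/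
/-!
With `q = e^{2πiτ}` we have `η(τ) = q^{1/24} ∏ (1 - q^{n+1})` and
`e^{3πi(n + 1/6)²τ} = q^{n(3n + 1)/2 + 1/24}`, so the claim is Euler's pentagonal number theorem
`∏ (1 - q^{n+1}) = ∑_{k ∈ ℤ} (-1)^k q^{k(3k-1)/2}` at a point with `‖q‖ < 1`.
That theorem holds in any topological ring in which a family of auxiliary series converges
(`Pentagonal.tprod_one_sub_pow`); for `‖q‖ < 1` their convergence follows from the uniform bound
`‖∏_{i<n} (1 - q^{k+i+1})‖ ≤ exp (∑ ‖q‖^i) = exp (1 - ‖q‖)⁻¹`.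
-/

open Complex Real

noncomputable def dedekindEta (τ : ℂ) : ℂ :=
  Complex.exp (π * I * τ / 12) * ∏' n : ℕ, (1 - Complex.exp (2 * π * I * (n + 1) * τ))

open Filter Topology Finset

namespace Pentagonal

variable {R : Type*} [NormedCommRing R] [NormOneClass R] {q : R}

lemma norm_pow_le_pow_of_le (hq : ‖q‖ ≤ 1) {m n : ℕ} (hmn : m ≤ n) : ‖q ^ n‖ ≤ ‖q‖ ^ m :=
  (norm_pow_le q n).trans (pow_le_pow_of_le_one (norm_nonneg q) hq hmn)

lemma norm_prod_one_sub_pow_le (hq : ‖q‖ < 1) (k n : ℕ) :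
    ‖∏ i ∈ range n, (1 - q ^ (k + i + 1))‖ ≤ Real.exp (1 - ‖q‖)⁻¹ := by
  have hsum : ∑ i ∈ range n, ‖-q ^ (k + i + 1)‖ ≤ (1 - ‖q‖)⁻¹ := calc
    ∑ i ∈ range n, ‖-q ^ (k + i + 1)‖ ≤ ∑ i ∈ range n, ‖q‖ ^ i := by
      gcongr with i
      rw [norm_neg]
      exact norm_pow_le_pow_of_le hq.le (by omega)
    _ ≤ ∑' i, ‖q‖ ^ i :=
      (summable_geometric_of_lt_one (norm_nonneg q) hq).sum_le_tsum _ fun _ _ ↦ by positivity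
    _ = (1 - ‖q‖)⁻¹ := tsum_geometric_of_lt_one (norm_nonneg q) hq
  calc ‖∏ i ∈ range n, (1 - q ^ (k + i + 1))‖
      ≤ ‖∏ i ∈ range n, (1 + -q ^ (k + i + 1)) - 1‖ + ‖(1 : R)‖ := by
        simp_rw [← sub_eq_add_neg]
        exact norm_le_norm_sub_add _ _
    _ ≤ Real.exp (∑ i ∈ range n, ‖-q ^ (k + i + 1)‖) - 1 + 1 := by
        grw [norm_prod_one_add_sub_one_le, norm_one]
    _ ≤ Real.exp (1 - ‖q‖)⁻¹ := by
        grw [sub_add_cancel, hsum]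

lemma norm_pow_mul_prod_one_sub_pow_le (hq : ‖q‖ < 1) (k n : ℕ) :
    ‖q ^ ((k + 1) * n) * ∏ i ∈ range (n + 1), (1 - q ^ (k + i + 1))‖ ≤
      Real.exp (1 - ‖q‖)⁻¹ * ‖q‖ ^ n := by
  rw [mul_comm (Real.exp _)]
  exact (norm_mul_le _ _).trans <| mul_le_mul
    (norm_pow_le_pow_of_le hq.le (Nat.le_mul_of_pos_left n k.succ_pos))
    (norm_prod_one_sub_pow_le hq k _) (norm_nonneg _) (by positivity)

omit [NormOneClass R] in
lemma hasSum_exp_mul_geometric (hq : ‖q‖ < 1) :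
    HasSum (fun n ↦ Real.exp (1 - ‖q‖)⁻¹ * ‖q‖ ^ n) (Real.exp (1 - ‖q‖)⁻¹ * (1 - ‖q‖)⁻¹) :=
  (hasSum_geometric_of_lt_one (norm_nonneg _) hq).mul_left _

lemma tendsto_pow_mul_tsum_pow_mul_prod_one_sub_pow (hq : ‖q‖ < 1) :
    Tendsto (fun k : ℕ ↦ (-1 : R) ^ (k + 1) * q ^ ((k + 1) * (3 * k + 4) / 2) *
      ∑' n, q ^ ((k + 1) * n) * ∏ i ∈ range (n + 1), (1 - q ^ (k + i + 1))) atTop (𝓝 0) := by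
  set C := Real.exp (1 - ‖q‖)⁻¹ * (1 - ‖q‖)⁻¹
  refine squeeze_zero_norm (a := fun k ↦ ‖q‖ ^ k * C) (fun k ↦ ?_) ?_
  · have hk : k ≤ (k + 1) * (3 * k + 4) / 2 := by
      rw [Nat.le_div_iff_mul_le two_pos]
      nlinarith
    have hsign : ‖(-1 : R) ^ (k + 1)‖ ≤ 1 := by
      simpa using norm_pow_le (-1 : R) (k + 1)
    grw [norm_mul_le, norm_mul_le, hsign, norm_pow_le_pow_of_le hq.le hk, one_mul,
      tsum_of_norm_bounded (hasSum_exp_mul_geometric hq) (norm_pow_mul_prod_one_sub_pow_le hq k)]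
  · simpa using (tendsto_pow_atTop_nhds_zero_of_lt_one (norm_nonneg _) hq).mul_const C

variable [CompleteSpace R]

lemma summable_pow_mul_prod_one_sub_pow (hq : ‖q‖ < 1) (k : ℕ) :
    Summable fun n ↦ q ^ ((k + 1) * n) * ∏ i ∈ range (n + 1), (1 - q ^ (k + i + 1)) :=
  (hasSum_exp_mul_geometric hq).summable.of_norm_bounded (norm_pow_mul_prod_one_sub_pow_le hq k)

lemma multipliable_one_sub_pow (hq : ‖q‖ < 1) (k : ℕ) :
    Multipliable fun n ↦ 1 - q ^ (n + k + 1) := by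
  simp_rw [sub_eq_add_neg]
  refine multipliable_one_add_of_summable <|
    (summable_geometric_of_lt_one (norm_nonneg _) hq).of_nonneg_of_le (fun _ ↦ norm_nonneg _)
      fun n ↦ ?_
  rw [norm_neg]
  exact norm_pow_le_pow_of_le hq.le (by omega)

lemma summable_negOnePow_mul_pow_pentagonal (hq : ‖q‖ < 1) :
    Summable fun k : ℤ ↦ (k.negOnePow : R) * q ^ pentagonal k := by
  refine ((summable_geometric_of_lt_one (norm_nonneg _) hq).comp_injective
    pentagonal_injective).of_norm_bounded fun k ↦ ?_
  rw [Int.coe_negOnePow]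
  grw [norm_mul_le, norm_pow_le (-1 : R), norm_pow_le q]
  simp

theorem tprod_one_sub_pow_eq_tsum_pentagonal (hq : ‖q‖ < 1) :
    ∏' n, (1 - q ^ (n + 1)) = ∑' k : ℤ, (k.negOnePow : R) * q ^ pentagonal k := by
  have hZ := (Equiv.neg ℤ).hasSum_iff.mpr (summable_negOnePow_mul_pow_pentagonal hq).hasSum
  have hN : HasSum (fun k : ℕ ↦ (-1) ^ k * (q ^ pentagonal (-k) - q ^ pentagonal (k + 1)))
      (∑' k : ℤ, (k.negOnePow : R) * q ^ pentagonal k) := by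
    convert hZ.nat_add_neg_add_one using 2 with k
    simp only [Function.comp_apply, Equiv.neg_apply, neg_neg, Int.negOnePow_neg,
      Int.negOnePow_succ, Units.val_neg, Int.cast_neg, Int.cast_negOnePow_natCast]
    ring
  rw [tprod_one_sub_pow (tendsto_pow_atTop_nhds_zero_of_norm_lt_one hq)
    (summable_pow_mul_prod_one_sub_pow hq) (multipliable_one_sub_pow hq) hN.summable
    (tendsto_pow_mul_tsum_pow_mul_prod_one_sub_pow hq), hN.tsum_eq]

end Pentagonal

lemma Complex.exp_pi_mul_I_mul_intCast (n : ℤ) : cexp (π * I * n) = n.negOnePow := by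
  rw [mul_comm, Complex.exp_int_mul, exp_pi_mul_I]
  rcases n.even_or_odd with h | h
  · rw [h.neg_one_zpow, Int.negOnePow_even n h, Units.val_one, Int.cast_one]
  · rw [h.neg_one_zpow, Int.negOnePow_odd n h, Units.val_neg, Units.val_one, Int.cast_neg,
      Int.cast_one]

theorem eta_series (τ : ℂ) (hτ : 0 < τ.im) :
    dedekindEta τ = ∑' n : ℤ, Complex.exp (π * I * n) *
      Complex.exp (3 * π * I * ((n : ℂ) + 1 / 6) ^ 2 * τ) := by
  set q := cexp (2 * π * I * τ)
  have hq : ‖q‖ < 1 := UpperHalfPlane.norm_exp_two_pi_I_lt_one ⟨τ, hτ⟩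
  have hprod : ∏' n : ℕ, (1 - cexp (2 * π * I * (n + 1) * τ)) = ∏' n : ℕ, (1 - q ^ (n + 1)) :=
    tprod_congr fun n ↦ by rw [← ModularForm.eta_q_eq_cexp, ModularForm.eta_q_eq_pow]
  rw [dedekindEta, hprod, Pentagonal.tprod_one_sub_pow_eq_tsum_pentagonal hq,
    ← (Equiv.neg ℤ).tsum_eq, ← tsum_mul_left]
  refine tsum_congr fun n ↦ ?_
  have hpent : (2 * pentagonal (-n) : ℂ) = n * (3 * n + 1) := by
    exact_mod_cast congrArg (Int.cast : ℤ → ℂ) (two_mul_natCast_pentagonal_neg n)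
  rw [Equiv.neg_apply, Int.negOnePow_neg, ← Complex.exp_pi_mul_I_mul_intCast,
    ← Complex.exp_nat_mul, ← Complex.exp_add, ← Complex.exp_add, ← Complex.exp_add]
  congr 1
  linear_combination (π : ℂ) * I * τ * hpent
end

section
/- Let χ: ℤ → ℂ be the Dirichlet character mod 12 with χ(±1 mod 12) = 1, χ(±5 mod 12) = -1, and χ(n) = 0 if gcd(n,12) > 1. Then for Im τ > 0, η(τ) = (1/2) ∑_{n∈ℤ} χ(n) e^{πiτn²/12}. -/
open Complex Real

noncomputable def χ (n : ℤ) : ℂ :=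
  if n % 12 = 1 ∨ n % 12 = 11 then 1
  else if n % 12 = 5 ∨ n % 12 = 7 then -1
  else 0

/-!
Euler's pentagonal number theorem `∏ₙ (1 - qⁿ⁺¹) = ∑ₘ (-1)ᵐ (q^P(-m) - q^P(m+1))`, with
`P(k) = k(3k-1)/2`, holds in any topological ring under summability hypotheses; for `‖q‖ < 1` these
all follow from the uniform bound `‖∏_{i ∈ s} (1 - q^(e i))‖ ≤ exp (1 / (1 - ‖q‖))` for `i ≤ e i`.
With `q = x²⁴` and `x = exp (π i τ / 12)`, the identities `24 P(-m) + 1 = (6m+1)²` and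
`24 P(m+1) + 1 = (6m+5)²` turn `η(τ) = x ∏ₙ (1 - qⁿ⁺¹)` into `∑ₘ (-1)ᵐ (x^(6m+1)² - x^(6m+5)²)`.
On the other side, `n ↦ χ(n) x^(n²)` is even, vanishes unless `n ≡ ±1 mod 6`, and
`χ(6m+1) = -χ(6m+5) = (-1)ᵐ`, so its sum over `ℤ` is twice that series.
-/

open Finset Filter Topology

lemma le_pentagonal_neg (k : ℕ) : k ≤ pentagonal (-k) := by
  have := two_mul_natCast_pentagonal_neg k
  zify
  nlinarith

lemma le_pentagonal_add_one (k : ℕ) : k ≤ pentagonal (k + 1) := by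
  have := two_mul_natCast_pentagonal (k + 1)
  zify
  nlinarith

namespace Complex

variable {x : ℂ}

lemma norm_prod_one_sub_pow_le (hx : ‖x‖ < 1) (s : Finset ℕ) {e : ℕ → ℕ} (he : ∀ i, i ≤ e i) :
    ‖∏ i ∈ s, (1 - x ^ e i)‖ ≤ Real.exp (1 - ‖x‖)⁻¹ :=
  calc ‖∏ i ∈ s, (1 - x ^ e i)‖
      ≤ ∏ i ∈ s, (1 + ‖x‖ ^ i) := by
        refine (Finset.norm_prod_le _ _).trans
          (prod_le_prod (fun _ _ ↦ norm_nonneg _) fun i _ ↦ ?_)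
        calc ‖1 - x ^ e i‖ ≤ 1 + ‖x‖ ^ e i := by simpa using norm_sub_le (1 : ℂ) (x ^ e i)
          _ ≤ 1 + ‖x‖ ^ i :=
            add_le_add_right (pow_le_pow_of_le_one (norm_nonneg x) hx.le (he i)) 1
    _ ≤ Real.exp (∑ i ∈ s, ‖x‖ ^ i) := Real.prod_one_add_le_exp_sum s fun _ ↦ by positivity
    _ ≤ Real.exp (1 - ‖x‖)⁻¹ := by
        gcongr
        rw [← tsum_geometric_of_lt_one (norm_nonneg x) hx]
        exact (summable_geometric_of_lt_one (norm_nonneg x) hx).sum_le_tsum s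
          fun _ _ ↦ by positivity

lemma norm_pow_mul_prod_one_sub_pow_le (hx : ‖x‖ < 1) (k n : ℕ) :
    ‖x ^ ((k + 1) * n) * ∏ i ∈ range (n + 1), (1 - x ^ (k + i + 1))‖ ≤
      Real.exp (1 - ‖x‖)⁻¹ * ‖x‖ ^ n := by
  rw [norm_mul, norm_pow, mul_comm]
  exact mul_le_mul (norm_prod_one_sub_pow_le hx _ fun i ↦ by omega)
    (pow_le_pow_of_le_one (norm_nonneg x) hx.le (Nat.le_mul_of_pos_left n k.succ_pos))
    (by positivity) (by positivity)

lemma summable_pow_mul_prod_one_sub_pow (hx : ‖x‖ < 1) (k : ℕ) :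
    Summable fun n ↦ x ^ ((k + 1) * n) * ∏ i ∈ range (n + 1), (1 - x ^ (k + i + 1)) :=
  ((summable_geometric_of_lt_one (norm_nonneg x) hx).mul_left _).of_norm_bounded
    (norm_pow_mul_prod_one_sub_pow_le hx k)

lemma norm_tsum_pow_mul_prod_one_sub_pow_le (hx : ‖x‖ < 1) (k : ℕ) :
    ‖∑' n, x ^ ((k + 1) * n) * ∏ i ∈ range (n + 1), (1 - x ^ (k + i + 1))‖ ≤
      Real.exp (1 - ‖x‖)⁻¹ * (1 - ‖x‖)⁻¹ :=
  tsum_of_norm_bounded ((hasSum_geometric_of_lt_one (norm_nonneg x) hx).mul_left _)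
    (norm_pow_mul_prod_one_sub_pow_le hx k)

lemma multipliable_one_sub_pow (hx : ‖x‖ < 1) (k : ℕ) :
    Multipliable fun n ↦ 1 - x ^ (n + k + 1) := by
  simp_rw [sub_eq_add_neg]
  refine multipliable_one_add_of_summable ?_
  simp_rw [norm_neg, norm_pow]
  exact (summable_nat_add_iff (k + 1)).mpr (summable_geometric_of_lt_one (norm_nonneg x) hx)

lemma norm_pow_sub_pow_le (hx : ‖x‖ < 1) {k m n : ℕ} (hm : k ≤ m) (hn : k ≤ n) :
    ‖x ^ m - x ^ n‖ ≤ 2 * ‖x‖ ^ k :=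
  calc ‖x ^ m - x ^ n‖ ≤ ‖x‖ ^ m + ‖x‖ ^ n := by simpa using norm_sub_le (x ^ m) (x ^ n)
    _ ≤ ‖x‖ ^ k + ‖x‖ ^ k := add_le_add (pow_le_pow_of_le_one (norm_nonneg x) hx.le hm)
        (pow_le_pow_of_le_one (norm_nonneg x) hx.le hn)
    _ = 2 * ‖x‖ ^ k := by ring

theorem hasSum_pentagonal (hx : ‖x‖ < 1) :
    HasSum (fun k : ℕ ↦ (-1) ^ k * (x ^ pentagonal (-k) - x ^ pentagonal (k + 1)))
      (∏' n, (1 - x ^ (n + 1))) := by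
  have hsum : Summable fun k : ℕ ↦ (-1) ^ k * (x ^ pentagonal (-k) - x ^ pentagonal (k + 1)) :=
    ((summable_geometric_of_lt_one (norm_nonneg x) hx).mul_left 2).of_norm_bounded fun k ↦ by
      simpa using norm_pow_sub_pow_le hx (le_pentagonal_neg k) (le_pentagonal_add_one k)
  have htail : Tendsto (fun k ↦ (-1) ^ (k + 1) * x ^ ((k + 1) * (3 * k + 4) / 2) *
      ∑' n, x ^ ((k + 1) * n) * ∏ i ∈ range (n + 1), (1 - x ^ (k + i + 1))) atTop (𝓝 0) := by
    refine squeeze_zero_norm (a := fun k ↦ ‖x‖ ^ (k + 1) * (Real.exp (1 - ‖x‖)⁻¹ * (1 - ‖x‖)⁻¹))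
      (fun k ↦ ?_) ?_
    · rw [norm_mul, norm_mul, norm_pow, norm_neg, norm_one, one_pow, one_mul, norm_pow]
      refine mul_le_mul (pow_le_pow_of_le_one (norm_nonneg x) hx.le ?_)
        (norm_tsum_pow_mul_prod_one_sub_pow_le hx k) (norm_nonneg _) (by positivity)
      rw [Nat.le_div_iff_mul_le two_pos]
      nlinarith
    · simpa using ((tendsto_pow_atTop_nhds_zero_of_lt_one (norm_nonneg x) hx).comp
        (tendsto_add_atTop_nat 1)).mul_const (Real.exp (1 - ‖x‖)⁻¹ * (1 - ‖x‖)⁻¹)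
  rw [Pentagonal.tprod_one_sub_pow (tendsto_pow_atTop_nhds_zero_of_norm_lt_one hx)
    (summable_pow_mul_prod_one_sub_pow hx) (multipliable_one_sub_pow hx) hsum htail]
  exact hsum.hasSum

lemma hasSum_neg_one_pow_mul_pow_sq (hx : ‖x‖ < 1) :
    HasSum (fun m : ℕ ↦ (-1) ^ m * (x ^ ((6 * m + 1) ^ 2) - x ^ ((6 * m + 5) ^ 2)))
      (x * ∏' n, (1 - (x ^ 24) ^ (n + 1))) := by
  have hx24 : ‖x ^ 24‖ < 1 := by rw [norm_pow]; exact pow_lt_one₀ (norm_nonneg x) hx (by norm_num)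
  refine ((hasSum_pentagonal hx24).mul_left x).congr_fun fun m ↦ ?_
  have h₁ : 24 * pentagonal (-m) + 1 = (6 * m + 1) ^ 2 := by
    have := two_mul_natCast_pentagonal_neg m
    zify; linear_combination 12 * this
  have h₅ : 24 * pentagonal (m + 1) + 1 = (6 * m + 5) ^ 2 := by
    have := two_mul_natCast_pentagonal (m + 1)
    zify; linear_combination 12 * this
  rw [← h₁, ← h₅]
  ring

end Complex

lemma χ_neg (n : ℤ) : χ (-n) = χ n := by
  simp only [χ]
  split_ifs <;> first | rfl | omega

lemma χ_eq_zero {n : ℤ} (h₁ : n % 6 ≠ 1) (h₅ : n % 6 ≠ 5) : χ n = 0 := by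
  simp only [χ]
  split_ifs <;> first | rfl | omega

lemma χ_six_mul_add_one (m : ℕ) : χ (6 * m + 1) = (-1) ^ m := by
  obtain ⟨t, rfl | rfl⟩ := Nat.even_or_odd' m <;> simp only [χ] <;> push_cast
  · rw [if_pos (by omega), pow_mul]
    norm_num
  · rw [if_neg (by omega), if_pos (by omega), pow_succ, pow_mul]
    norm_num

lemma χ_six_mul_add_five (m : ℕ) : χ (6 * m + 5) = -(-1) ^ m := by
  obtain ⟨t, rfl | rfl⟩ := Nat.even_or_odd' m <;> simp only [χ] <;> push_cast
  · rw [if_neg (by omega), if_pos (by omega), pow_mul]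
    norm_num
  · rw [if_pos (by omega), pow_succ, pow_mul]
    norm_num

lemma norm_χ_le_one (n : ℤ) : ‖χ n‖ ≤ 1 := by
  simp only [χ]
  split_ifs <;> simp

theorem tsum_int_eq_two_nsmul_tsum_nat {G : Type*} [AddCommGroup G] [TopologicalSpace G]
    [IsTopologicalAddGroup G] [T2Space G] {f : ℤ → G} (hf : Summable fun n : ℕ ↦ f n)
    (heven : ∀ n, f (-n) = f n) (h₀ : f 0 = 0) :
    ∑' n : ℤ, f n = 2 • ∑' n : ℕ, f n := by
  rw [hf.tsum_of_nat_of_neg (by simpa only [heven] using hf)]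
  simp [heven, h₀, two_nsmul]

theorem tsum_eq_tsum_six_mul_add_one_add_five {R : Type*} [AddCommGroup R] [UniformSpace R]
    [IsUniformAddGroup R] [CompleteSpace R] [T0Space R] {f : ℕ → R} (hf : Summable f)
    (hsupp : ∀ n, n % 6 ≠ 1 → n % 6 ≠ 5 → f n = 0) :
    ∑' n, f n = ∑' m, (f (6 * m + 1) + f (6 * m + 5)) := by
  have hres (j : ℕ) : Summable fun m ↦ f (j + 6 * m) :=
    hf.comp_injective fun a b h ↦ by omega
  have hzero (j : ℕ) (h₁ : j ≠ 1) (h₅ : j ≠ 5) (hj : j < 6) : ∑' m, f (j + 6 * m) = 0 :=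
    (tsum_congr fun m ↦ hsupp _ (by omega) (by omega)).trans tsum_zero
  rw [Nat.sumByResidueClasses hf 6]
  change ∑ j : Fin 6, _ = _
  simp only [Fin.sum_univ_six]
  change ∑' m, f (0 + 6 * m) + ∑' m, f (1 + 6 * m) + ∑' m, f (2 + 6 * m) + ∑' m, f (3 + 6 * m)
    + ∑' m, f (4 + 6 * m) + ∑' m, f (5 + 6 * m) = _
  rw [hzero 0 (by omega) (by omega) (by omega), hzero 2 (by omega) (by omega) (by omega),
    hzero 3 (by omega) (by omega) (by omega), hzero 4 (by omega) (by omega) (by omega),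
    zero_add, add_zero, add_zero, add_zero, ← (hres 1).tsum_add (hres 5)]
  simp only [add_comm _ (6 * _)]

lemma summable_χ_mul_pow_sq {x : ℂ} (hx : ‖x‖ < 1) : Summable fun n : ℕ ↦ χ n * x ^ (n ^ 2) :=
  (summable_geometric_of_lt_one (norm_nonneg x) hx).of_norm_bounded fun n ↦ by
    rw [norm_mul, norm_pow]
    calc ‖χ n‖ * ‖x‖ ^ (n ^ 2) ≤ 1 * ‖x‖ ^ n := mul_le_mul (norm_χ_le_one n)
          (pow_le_pow_of_le_one (norm_nonneg x) hx.le (Nat.le_self_pow two_ne_zero n))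
          (by positivity) zero_le_one
      _ = ‖x‖ ^ n := one_mul _

lemma norm_cexp_pi_I_mul_div_twelve_lt_one {τ : ℂ} (hτ : 0 < τ.im) :
    ‖cexp (π * I * τ / 12)‖ < 1 := by
  rw [norm_exp, Real.exp_lt_one_iff]
  have : (π * I * τ / 12).re = -(π * τ.im) / 12 := by simp [Complex.mul_re]
  rw [this]
  have := mul_pos pi_pos hτ
  linarith

lemma dedekindEta_eq_mul_tprod (τ : ℂ) : dedekindEta τ =
    cexp (π * I * τ / 12) * ∏' n : ℕ, (1 - (cexp (π * I * τ / 12) ^ 24) ^ (n + 1)) := by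
  simp_rw [dedekindEta, ← Complex.exp_nat_mul]
  push_cast
  ring_nf

lemma cexp_pi_I_mul_sq_div_twelve (τ : ℂ) (n : ℕ) :
    cexp (π * I * τ * (n : ℂ) ^ 2 / 12) = cexp (π * I * τ / 12) ^ (n ^ 2) := by
  rw [← Complex.exp_nat_mul]
  push_cast
  ring_nf

theorem eta_character_series (τ : ℂ) (hτ : 0 < τ.im) :
    dedekindEta τ = (1 / 2 : ℂ) * ∑' n : ℤ, χ n * Complex.exp (π * I * τ * (n : ℂ) ^ 2 / 12) := by
  rw [dedekindEta_eq_mul_tprod]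
  set x := cexp (π * I * τ / 12)
  have hx : ‖x‖ < 1 := norm_cexp_pi_I_mul_div_twelve_lt_one hτ
  have hterm (n : ℕ) : χ n * cexp (π * I * τ * ((n : ℤ) : ℂ) ^ 2 / 12) = χ n * x ^ (n ^ 2) := by
    rw [Int.cast_natCast, cexp_pi_I_mul_sq_div_twelve]
  have hpair (m : ℕ) :
      χ ↑(6 * m + 1) * x ^ ((6 * m + 1) ^ 2) + χ ↑(6 * m + 5) * x ^ ((6 * m + 5) ^ 2) =
        (-1) ^ m * (x ^ ((6 * m + 1) ^ 2) - x ^ ((6 * m + 5) ^ 2)) := by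
    push_cast
    rw [χ_six_mul_add_one, χ_six_mul_add_five]
    ring
  rw [tsum_int_eq_two_nsmul_tsum_nat (by simpa only [hterm] using summable_χ_mul_pow_sq hx)
      (fun n ↦ by rw [χ_neg, Int.cast_neg, neg_sq]) (by simp [χ]),
    tsum_congr hterm, tsum_eq_tsum_six_mul_add_one_add_five (summable_χ_mul_pow_sq hx)
      (fun n h₁ h₅ ↦ by rw [χ_eq_zero (by omega) (by omega), zero_mul]),
    tsum_congr hpair, (Complex.hasSum_neg_one_pow_mul_pow_sq hx).tsum_eq]
  simp
end
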